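/- arXiv:2111.13484 — 3 statements merged into one kernel-verified Lean document; each statement's English description precedes it below -/
import Mathlib

section
/- Let p be an odd prime and j an odd integer with p not dividing j. Then the alternating sum over k = 1 to (p−1)/2 of (−1)^{k+1} cos(jkπ/p) equals 1/2. -/
open Real

lemma sum_cos_range_aux (p : ℕ) (hp : 0 < p) (m : ℤ) (hm : ¬ (p : ℤ) ∣ m) :
    ∑ k ∈ Finset.range p, Real.cos (2 * π * m * k / p) = 0 := by
  have hp0 : (p : ℝ) ≠ 0 := Nat.cast_ne_zero.mpr hp.ne'
  have hpC : (p : ℂ) ≠ 0 := Nat.cast_ne_zero.mpr hp.ne'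
  set z : ℂ := Complex.exp ((2 * π * m / p : ℝ) * Complex.I) with hz
  have hz1 : z ≠ 1 := by
    rw [hz, Ne, Complex.exp_eq_one_iff]
    rintro ⟨n, hn⟩
    apply hm
    have h2 : ((2 * π * m / p : ℝ) : ℂ) = (n : ℂ) * (2 * π) := by
      have : ((2 * π * m / p : ℝ) : ℂ) * Complex.I = ((n : ℂ) * (2 * π)) * Complex.I := by
        rw [hn]; ring
      exact mul_right_cancel₀ Complex.I_ne_zero this
    have h3 : (2 * π * m / p : ℝ) = n * (2 * π) := by exact_mod_cast h2
    have h4 : (m : ℝ) = n * p := by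
      field_simp at h3
      have h2π : (2 * π : ℝ) ≠ 0 := by positivity
      apply mul_left_cancel₀ h2π
      linear_combination (2 * π) * h3
    have h5 : m = n * p := by exact_mod_cast h4
    exact ⟨n, by linarith [h5]⟩
  have hzp : z ^ p = 1 := by
    rw [hz, ← Complex.exp_nat_mul]
    have : (p : ℂ) * (((2 * π * m / p : ℝ) : ℂ) * Complex.I) = (m : ℂ) * (2 * π * Complex.I) := by
      push_cast
      field_simp
    rw [this, Complex.exp_int_mul_two_pi_mul_I]
  have hsum : ∑ k ∈ Finset.range p, z ^ k = 0 := by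
    rw [geom_sum_eq hz1, hzp, sub_self, zero_div]
  have key : ∑ k ∈ Finset.range p, Real.cos (2 * π * m * k / p)
      = (∑ k ∈ Finset.range p, z ^ k).re := by
    rw [Complex.re_sum]
    refine Finset.sum_congr rfl fun k _ => ?_
    rw [hz, ← Complex.exp_nat_mul]
    have : (k : ℂ) * (((2 * π * m / p : ℝ) : ℂ) * Complex.I)
        = ((2 * π * m * k / p : ℝ) : ℂ) * Complex.I := by
      push_cast; ring
    rw [this, Complex.exp_ofReal_mul_I_re]
  rw [key, hsum, Complex.zero_re]

theorem alternating_cos_sum (p : ℕ) (hp : p.Prime) (hpodd : Odd p)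
    (j : ℤ) (hj : Odd j) (hpj : ¬ (p : ℤ) ∣ j) :
    ∑ k ∈ Finset.Icc 1 ((p - 1) / 2),
      (-1 : ℝ) ^ (k + 1) * Real.cos (j * k * π / p) = 1 / 2 := by
  obtain ⟨h, hh⟩ := hpodd
  obtain ⟨a, ha⟩ := hj
  have hp0 : 0 < p := hp.pos
  have hpR : (p : ℝ) ≠ 0 := Nat.cast_ne_zero.mpr hp0.ne'
  set m : ℤ := a + h + 1 with hmdef
  have hm2 : 2 * m = j + p := by
    rw [hmdef, ha, hh]; push_cast; ring
  have hpm : ¬ (p : ℤ) ∣ m := by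
    intro hd
    apply hpj
    have h1 : (p : ℤ) ∣ 2 * m := hd.mul_left 2
    rw [hm2] at h1
    have := h1.sub (dvd_refl (p : ℤ))
    simpa using this
  -- the main cosine function
  set f : ℕ → ℝ := fun k => Real.cos (2 * π * m * k / p) with hf
  have hfull : ∑ k ∈ Finset.range p, f k = 0 := sum_cos_range_aux p hp0 m hpm
  -- reflection identity: f (p - k) = f k, expressed via indices
  have hrefl : ∀ i : ℕ, i < h → f (h + i + 1) = f (h - i) := by
    intro i hi
    have hcast : ((h - i : ℕ) : ℝ) = (h : ℝ) - i := by
      rw [Nat.cast_sub hi.le]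
    rw [hf]
    simp only
    have harg : 2 * π * m * (h + i + 1 : ℕ) / p
        = (m : ℝ) * (2 * π) - 2 * π * m * ((h - i : ℕ) : ℝ) / p := by
      rw [hcast, hh]
      push_cast
      field_simp
      ring
    rw [harg, Real.cos_int_mul_two_pi_sub]
  have hhalf : (p - 1) / 2 = h := by omega
  rw [hhalf]
  -- rewrite each term
  have hterm : ∀ k ∈ Finset.Icc 1 h,
      (-1 : ℝ) ^ (k + 1) * Real.cos (j * k * π / p) = -f k := by
    intro k _
    have harg : 2 * π * m * k / p = j * k * π / p + k * π := by
      have : (m : ℝ) = ((j : ℝ) + p) / 2 := by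
        have := hm2
        have : (2 : ℝ) * m = j + p := by exact_mod_cast hm2
        linarith
      rw [this]
      field_simp
    rw [hf]
    simp only
    rw [harg, Real.cos_add_nat_mul_pi]
    ring
  rw [Finset.sum_congr rfl hterm, Finset.sum_neg_distrib]
  -- now show ∑ k ∈ Icc 1 h, f k = -1/2
  have hIcc : ∑ k ∈ Finset.Icc 1 h, f k = ∑ i ∈ Finset.range h, f (i + 1) := by
    rw [← Finset.Ico_add_one_right_eq_Icc, Finset.sum_Ico_eq_sum_range]
    simp [add_comm]
  have hsplit : ∑ k ∈ Finset.range p, f k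
      = f 0 + ∑ i ∈ Finset.range h, f (i + 1) + ∑ i ∈ Finset.range h, f (h + i + 1) := by
    have hp2 : p = 2 * h + 1 := hh
    rw [hp2, Finset.sum_range_succ', two_mul, Finset.sum_range_add]
    ring
  have hsecond : ∑ i ∈ Finset.range h, f (h + i + 1) = ∑ i ∈ Finset.range h, f (i + 1) := by
    rw [Finset.sum_congr rfl (fun i hi => hrefl i (Finset.mem_range.mp hi))]
    rw [← Finset.sum_range_reflect (fun i => f (i + 1)) h]
    refine Finset.sum_congr rfl fun i hi => ?_
    congr 1
    have := Finset.mem_range.mp hi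
    omega
  have hf0 : f 0 = 1 := by rw [hf]; simp
  have hS : ∑ i ∈ Finset.range h, f (i + 1) = -(1 / 2) := by
    rw [hsplit, hsecond, hf0] at hfull
    linarith
  rw [hIcc, hS]
  norm_num
end

section
/- For n ≥ 3, Φ_n⁺(2) = Φ_n(1), where Φ_n⁺ is the minimal polynomial of 2cos(2π/n) and Φ_n is the n-th cyclotomic polynomial. In particular Φ_{2^r k}⁺(2) = 2 if k = 1 (r ≥ 2) and Φ_{2^r k}⁺(2) = 1 if k ≥ 3 is odd. -/
open Polynomial Real IntermediateField

lemma two_cos_eq (n : ℕ) (hn : 3 ≤ n) :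
    ((2 * Real.cos (2 * π / n) : ℝ) : ℂ)
      = Complex.exp (2 * π * Complex.I / n) + (Complex.exp (2 * π * Complex.I / n))⁻¹ := by
  have hn0 : (n : ℂ) ≠ 0 := by exact_mod_cast (by omega : n ≠ 0)
  have h1 : (2 * π * Complex.I / n) = ((2 * π / n : ℝ) : ℂ) * Complex.I := by
    push_cast; ring
  rw [h1, ← Complex.exp_neg]
  push_cast [Complex.ofReal_cos]
  rw [Complex.cos]
  ring

lemma key (n : ℕ) (hn : 3 ≤ n) :
    (minpoly ℚ (2 * Real.cos (2 * π / n))).eval 2 = (Polynomial.cyclotomic n ℚ).eval 1 := by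
  have hnpos : 0 < n := by omega
  set ζ : ℂ := Complex.exp (2 * π * Complex.I / n) with hζdef
  have hζ : IsPrimitiveRoot ζ n := Complex.isPrimitiveRoot_exp n (by omega)
  have hζ0 : ζ ≠ 0 := Complex.exp_ne_zero _
  set αr : ℝ := 2 * Real.cos (2 * π / n) with hαdef
  have hαc : (αr : ℂ) = ζ + ζ⁻¹ := two_cos_eq n hn
  -- integrality
  have hζint : IsIntegral ℚ ζ := (hζ.isIntegral hnpos).tower_top
  have hαcint : IsIntegral ℚ ((αr : ℂ)) := by
    rw [hαc]
    have : ζ⁻¹ = ζ ^ (n - 1) :=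
      inv_eq_of_mul_eq_one_right
        (by rw [← pow_succ', Nat.sub_add_cancel (by omega : 1 ≤ n)]; exact hζ.pow_eq_one)
    rw [this]
    exact hζint.add (hζint.pow _)
  have hαrint : IsIntegral ℚ αr := by
    rwa [show ((αr : ℂ)) = algebraMap ℝ ℂ αr from rfl,
      isIntegral_algebraMap_iff Complex.ofReal_injective] at hαcint
  set P : ℚ[X] := minpoly ℚ αr with hP
  have hPmin : minpoly ℚ ((αr : ℂ)) = P := by
    rw [show ((αr : ℂ)) = algebraMap ℝ ℂ αr from rfl,
      minpoly.algebraMap_eq Complex.ofReal_injective]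
  set d : ℕ := P.natDegree with hd
  have hd1 : 1 ≤ d := minpoly.natDegree_pos hαrint
  set Q : ℚ[X] := ∑ i ∈ Finset.range (d + 1),
      C (P.coeff i) * (X ^ (d - i) * (X ^ 2 + 1) ^ i) with hQ
  -- ζ²+1 = ζ * αc
  have hζα : (ζ ^ 2 + 1 : ℂ) = ζ * (αr : ℂ) := by
    rw [hαc]; field_simp
  -- Q kills ζ
  have hQζ : aeval ζ Q = 0 := by
    have h1 : aeval ζ Q = ζ ^ d * aeval ((αr : ℂ)) P := by
      rw [hQ, map_sum, Polynomial.aeval_eq_sum_range (p := P) (x := ((αr : ℂ))),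
        Finset.mul_sum]
      refine Finset.sum_congr rfl fun i hi => ?_
      have hid : i ≤ d := by
        have := Finset.mem_range.mp hi; omega
      rw [map_mul, map_mul, aeval_C, map_pow, map_pow, aeval_X, map_add, map_pow,
        aeval_X, map_one, hζα, mul_pow, Algebra.smul_def]
      rw [show ζ ^ (d - i) * (ζ ^ i * ((αr:ℂ)) ^ i) = (ζ ^ (d-i) * ζ ^ i) * ((αr:ℂ)) ^ i by ring,
        ← pow_add, Nat.sub_add_cancel hid]
      ring
    rw [h1, ← hPmin, minpoly.aeval, mul_zero]
  -- Q is monic of degree 2d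
  have hX21 : ((X : ℚ[X]) ^ 2 + 1).degree = 2 := by
    rw [show ((1 : ℚ[X])) = C 1 from (map_one C).symm]
    exact degree_X_pow_add_C (by norm_num) 1
  have hrest : (∑ i ∈ Finset.range d,
      C (P.coeff i) * (X ^ (d - i) * (X ^ 2 + 1) ^ i)).degree < ((2 * d : ℕ) : WithBot ℕ) := by
    refine lt_of_le_of_lt (degree_sum_le _ _) ?_
    rw [Finset.sup_lt_iff (by exact_mod_cast WithBot.bot_lt_coe _)]
    intro i hi
    have hid : i < d := Finset.mem_range.mp hi
    calc (C (P.coeff i) * (X ^ (d - i) * (X ^ 2 + 1) ^ i)).degree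
        ≤ (C (P.coeff i)).degree + (X ^ (d - i) * ((X : ℚ[X]) ^ 2 + 1) ^ i).degree :=
          degree_mul_le _ _
      _ ≤ 0 + (X ^ (d - i) * ((X : ℚ[X]) ^ 2 + 1) ^ i).degree :=
          add_le_add_left degree_C_le _
      _ = ((d - i + 2 * i : ℕ) : WithBot ℕ) := by
          rw [zero_add, degree_mul, degree_X_pow, degree_pow, hX21, nsmul_eq_mul]
          push_cast
          ring
      _ < ((2 * d : ℕ) : WithBot ℕ) := by
          exact_mod_cast (by omega : d - i + 2 * i < 2 * d)
  have hQsplit : Q = ((X : ℚ[X]) ^ 2 + 1) ^ d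
      + ∑ i ∈ Finset.range d, C (P.coeff i) * (X ^ (d - i) * (X ^ 2 + 1) ^ i) := by
    rw [hQ, Finset.sum_range_succ, (minpoly.monic hαrint).coeff_natDegree, map_one, one_mul,
      Nat.sub_self, pow_zero, one_mul, add_comm]
  have hX21m : (((X : ℚ[X]) ^ 2 + 1) ^ d).Monic := by
    have : ((X : ℚ[X]) ^ 2 + 1).Monic := by
      rw [show ((1 : ℚ[X])) = C 1 from (map_one C).symm]
      exact monic_X_pow_add_C _ (by norm_num)
    exact this.pow d
  have hX21deg : (((X : ℚ[X]) ^ 2 + 1) ^ d).degree = ((2 * d : ℕ) : WithBot ℕ) := by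
    rw [degree_pow, hX21]; push_cast; ring
  have hQmonic : Q.Monic := by
    rw [hQsplit]
    exact hX21m.add_of_left (by rw [hX21deg]; exact hrest)
  have hQdeg : Q.natDegree = 2 * d := by
    have : Q.degree = (2 * d : ℕ) := by
      rw [hQsplit, degree_add_eq_left_of_degree_lt (by rw [hX21deg]; exact hrest), hX21deg]
    exact natDegree_eq_of_degree_eq_some this
  -- divisibility by cyclotomic
  have hQne : Q ≠ 0 := hQmonic.ne_zero
  have hcyc : cyclotomic n ℚ = minpoly ℚ ζ := cyclotomic_eq_minpoly_rat hζ hnpos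
  have hdvd : cyclotomic n ℚ ∣ Q := by rw [hcyc]; exact minpoly.dvd ℚ ζ hQζ
  have htot_le : n.totient ≤ 2 * d := by
    have := natDegree_le_of_dvd hdvd hQne
    rwa [natDegree_cyclotomic, hQdeg] at this
  -- field tower
  have hL : FiniteDimensional ℚ ℚ⟮ζ⟯ := IntermediateField.adjoin.finiteDimensional hζint
  have hLrank : Module.finrank ℚ ℚ⟮ζ⟯ = n.totient := by
    rw [IntermediateField.adjoin.finrank hζint, ← hcyc, natDegree_cyclotomic]
  have hαmem : (αr : ℂ) ∈ ℚ⟮ζ⟯ := by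
    rw [hαc]
    exact add_mem (IntermediateField.mem_adjoin_simple_self ℚ ζ)
      (inv_mem (IntermediateField.mem_adjoin_simple_self ℚ ζ))
  have hdvd2 : d ∣ n.totient := by
    have h1 : minpoly ℚ (⟨(αr : ℂ), hαmem⟩ : ℚ⟮ζ⟯) = P := by
      rw [← hPmin, ← minpoly.algebraMap_eq (algebraMap ℚ⟮ζ⟯ ℂ).injective
        (⟨(αr : ℂ), hαmem⟩ : ℚ⟮ζ⟯)]
      rfl
    have h2 := minpoly.degree_dvd (K := ℚ) (x := (⟨(αr : ℂ), hαmem⟩ : ℚ⟮ζ⟯))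
      (IsIntegral.of_finite ℚ _)
    rwa [h1, hLrank] at h2
  -- the real subfield
  have hζnotmem : ζ ∉ ℚ⟮(αr : ℂ)⟯ := by
    intro hmem
    set Rsub : IntermediateField ℚ ℂ :=
      Subfield.toIntermediateField Complex.ofRealHom.fieldRange
        (fun x => ⟨(x : ℝ), by simp⟩) with hRsub
    have hle : ℚ⟮(αr : ℂ)⟯ ≤ Rsub :=
      IntermediateField.adjoin_simple_le_iff.mpr ⟨αr, rfl⟩
    obtain ⟨r, hr⟩ := hle hmem
    have him0 : ζ.im = 0 := by rw [← hr]; simp [Complex.ofRealHom]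
    have him : ζ.im = Real.sin (2 * π / n) := by
      rw [hζdef, show (2 * π * Complex.I / n) = ((2 * π / n : ℝ) : ℂ) * Complex.I by
        push_cast; ring, Complex.exp_ofReal_mul_I_im]
    have hnR : (3 : ℝ) ≤ n := by exact_mod_cast hn
    have hsin : 0 < Real.sin (2 * π / n) := by
      apply Real.sin_pos_of_pos_of_lt_pi
      · positivity
      · rw [div_lt_iff₀ (by positivity)]
        nlinarith [Real.pi_pos]
    rw [him0] at him
    linarith
  have hKlt : ℚ⟮(αr : ℂ)⟯ < ℚ⟮ζ⟯ := by
    refine lt_of_le_of_ne (IntermediateField.adjoin_simple_le_iff.mpr hαmem) fun h => ?_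
    exact hζnotmem (h ▸ IntermediateField.mem_adjoin_simple_self ℚ ζ)
  have hK'rank : Module.finrank ℚ ℚ⟮(αr : ℂ)⟯ = d := by
    rw [IntermediateField.adjoin.finrank hαcint, hPmin]
  have hlt : d < n.totient := by
    haveI : FiniteDimensional ℚ (Subalgebra.toSubmodule ℚ⟮ζ⟯.toSubalgebra) := hL
    rw [← hK'rank, ← hLrank]
    exact Submodule.finrank_lt_finrank_of_lt
      (s := Subalgebra.toSubmodule ℚ⟮(αr : ℂ)⟯.toSubalgebra)
      (t := Subalgebra.toSubmodule ℚ⟮ζ⟯.toSubalgebra) (by exact_mod_cast hKlt)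
  -- conclude totient = 2d
  have htot : n.totient = 2 * d := by
    have htpos : 0 < n.totient := Nat.totient_pos.mpr hnpos
    obtain ⟨k, hk⟩ := hdvd2
    have hk2 : 2 ≤ k := by
      rcases Nat.lt_or_ge k 2 with h | h
      · interval_cases k <;> omega
      · exact h
    have h2dk : 2 * d ≤ d * k := by
      calc 2 * d = d * 2 := by ring
        _ ≤ d * k := Nat.mul_le_mul_left d hk2
    omega
  have hQeq : Q = cyclotomic n ℚ := by
    have hassoc : Associated (cyclotomic n ℚ) Q :=
      associated_of_dvd_of_natDegree_le hdvd hQne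
        (by rw [natDegree_cyclotomic, hQdeg, htot])
    exact (eq_of_monic_of_associated (cyclotomic.monic n ℚ) hQmonic hassoc).symm
  have heval : eval 1 Q = eval 2 P := by
    rw [hQ, eval_finset_sum, Polynomial.eval_eq_sum_range (p := P) (x := (2 : ℚ))]
    refine Finset.sum_congr rfl fun i hi => ?_
    simp only [eval_mul, eval_pow, eval_add, eval_one, eval_C, eval_X, one_pow, smul_eq_mul]
    norm_num
  rw [← hQeq, heval]

theorem minpoly_two_cos_eval_two :
    (∀ n : ℕ, 3 ≤ n →
      (Polynomial.aeval (2 : ℝ)) (minpoly ℚ (2 * Real.cos (2 * π / n)))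
        = (Polynomial.cyclotomic n ℝ).eval 1) ∧
    (∀ r : ℕ, 2 ≤ r →
      (Polynomial.aeval (2 : ℝ)) (minpoly ℚ (2 * Real.cos (2 * π / (2 ^ r)))) = 2) ∧
    (∀ r k : ℕ, 2 ≤ r → 3 ≤ k → Odd k →
      (Polynomial.aeval (2 : ℝ)) (minpoly ℚ (2 * Real.cos (2 * π / (2 ^ r * k)))) = 1) := by
  have main : ∀ n : ℕ, 3 ≤ n →
      (Polynomial.aeval (2 : ℝ)) (minpoly ℚ (2 * Real.cos (2 * π / n)))
        = (Polynomial.cyclotomic n ℝ).eval 1 := by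
    intro n hn
    have h := key n hn
    calc (Polynomial.aeval (2 : ℝ)) (minpoly ℚ (2 * Real.cos (2 * π / n)))
        = eval₂ (algebraMap ℚ ℝ) ((algebraMap ℚ ℝ) 2) (minpoly ℚ (2 * Real.cos (2 * π / n))) := by
          rw [aeval_def]; norm_num
      _ = algebraMap ℚ ℝ ((minpoly ℚ (2 * Real.cos (2 * π / n))).eval 2) :=
          Polynomial.eval₂_at_apply _ _
      _ = (Polynomial.cyclotomic n ℝ).eval 1 := by
          rw [h, ← map_cyclotomic n (algebraMap ℚ ℝ), Polynomial.eval_one_map]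
  refine ⟨main, fun r hr => ?_, fun r k hr hk hodd => ?_⟩
  · have h4 : 4 ≤ 2 ^ r := by
      calc 4 = 2 ^ 2 := by norm_num
        _ ≤ 2 ^ r := Nat.pow_le_pow_right (by norm_num) hr
    have h := main (2 ^ r) (by omega)
    have hcast : (((2 : ℕ) ^ r : ℕ) : ℝ) = (2 : ℝ) ^ r := by push_cast; ring
    rw [hcast] at h
    rw [h, show (2 : ℕ) ^ r = 2 ^ ((r - 1) + 1) by congr 1; omega,
      Polynomial.eval_one_cyclotomic_prime_pow]
    norm_num
  · have h4 : 4 ≤ 2 ^ r := by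
      calc 4 = 2 ^ 2 := by norm_num
        _ ≤ 2 ^ r := Nat.pow_le_pow_right (by norm_num) hr
    have h := main (2 ^ r * k) (by nlinarith)
    have hcast : (((2 : ℕ) ^ r * k : ℕ) : ℝ) = (2 : ℝ) ^ r * k := by push_cast; ring
    rw [hcast] at h
    rw [h, Polynomial.eval_one_cyclotomic_not_prime_pow]
    intro p hp j hpj
    have h2dvd : 2 ∣ 2 ^ r * k := Dvd.dvd.mul_right (dvd_pow_self 2 (by omega)) k
    rw [← hpj] at h2dvd
    have hp2 : p = 2 := by
      have := (Nat.prime_two.dvd_of_dvd_pow h2dvd)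
      exact ((Nat.prime_dvd_prime_iff_eq Nat.prime_two hp).mp this).symm
    subst hp2
    have hkdvd : k ∣ 2 ^ j := by
      rw [hpj]
      exact dvd_mul_left k _
    have hcop : Nat.Coprime k (2 ^ j) := (hodd.coprime_two_right).pow_right j
    have := Nat.eq_one_of_dvd_coprimes hcop (dvd_refl k) hkdvd
    omega
end

section
/- For r ≥ 2, Φ_{2^r}⁺(x) = u_{2^{r−2}}(x), i.e. the minimal polynomial of 2cos(2π/2^r) = 2cos(π/2^{r−1}) over ℚ equals 2·T_{2^{r−2}}(x/2). -/
/-!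
`u n` is Mathlib's Vieta–Lucas polynomial `Chebyshev.C ℚ n`, and `C n (2 cos θ) = 2 cos (n θ)`
makes `2 cos (2π / 2 ^ (k + 2))` a root of `C (2 ^ k)`. Since
`C (2 ^ (k + 1)) = C (2 ^ k) ^ 2 - 2`, the integer polynomial `C (2 ^ k)` is monic, congruent to
`X ^ 2 ^ k ≡ (X - 2) ^ 2 ^ k` modulo `2`, and takes the value `2` at `2`: Eisenstein's
criterion at `2` after the shift `X ↦ X + 2` makes it irreducible over `ℤ`, hence over `ℚ` by
Gauss's lemma.
-/

open Polynomial Real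

/-- `u n = 2 * T n (x/2)` where `T` is the Chebyshev polynomial of the first kind. -/
noncomputable def u (n : ℕ) : Polynomial ℚ :=
  2 * (Polynomial.Chebyshev.T ℚ n).comp (Polynomial.C (1/2) * Polynomial.X)

namespace Polynomial.Chebyshev

section CommRing

variable (R : Type*) [CommRing R]

theorem C_two_pow_succ (k : ℕ) : C R (2 ^ (k + 1)) = C R (2 ^ k) ^ 2 - 2 := by
  rw [pow_succ', C_mul, C_two]
  simp

theorem monic_C_two_pow_and_natDegree [Nontrivial R] (k : ℕ) :
    (C R (2 ^ k)).Monic ∧ (C R (2 ^ k)).natDegree = 2 ^ k := by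
  induction k with
  | zero => simp [C_one]
  | succ k ih =>
    have hsq : (C R (2 ^ k) ^ 2).natDegree = 2 ^ (k + 1) := by
      rw [ih.1.natDegree_pow, ih.2, pow_succ, mul_comm]
    have hlt : (2 : R[X]).natDegree < (C R (2 ^ k) ^ 2).natDegree := by
      rw [hsq, natDegree_ofNat]; positivity
    rw [C_two_pow_succ]
    exact ⟨(ih.1.pow 2).sub_of_left (degree_lt_degree hlt),
      (natDegree_sub_eq_left_of_natDegree_lt hlt).trans hsq⟩

theorem C_two_pow_of_charP_two [CharP R 2] (k : ℕ) : C R (2 ^ k) = X ^ 2 ^ k := by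
  induction k with
  | zero => simp [C_one]
  | succ k ih =>
    rw [C_two_pow_succ, ih, CharTwo.two_eq_zero (R := R[X]), sub_zero, ← pow_mul, pow_succ]

theorem aeval_C_two_mul_cos [Algebra R ℝ] (n : ℤ) (θ : ℝ) :
    aeval (2 * cos θ) (C R n) = 2 * cos (n * θ) := by
  rw [aeval_def, eval₂_eq_eval_map, map_C, C_two_mul_real_cos]

end CommRing

theorem irreducible_C_two_pow (k : ℕ) : Irreducible (C ℤ (2 ^ k)) := by
  obtain ⟨hmonic, hdeg⟩ := monic_C_two_pow_and_natDegree ℤ k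
  have hmod2 : (C ℤ (2 ^ k)).map (algebraMap ℤ (ZMod 2)) =
      Polynomial.C (algebraMap ℤ (ZMod 2) (C ℤ (2 ^ k)).leadingCoeff) *
        (X - Polynomial.C 2 : ℤ[X]).map (algebraMap ℤ (ZMod 2)) ^ 2 ^ k := by
    rw [hmonic.leadingCoeff, map_one, Polynomial.C_1, one_mul, map_C, Polynomial.map_sub, map_X,
      Polynomial.map_C, C_two_pow_of_charP_two, map_ofNat,
      CharTwo.two_eq_zero (R := ZMod 2), map_zero, sub_zero]
  refine generalizedEisenstein (K := ZMod 2) (p := 2 ^ k) ?_ (monic_X_sub_C 2)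
    hmonic.isPrimitive (by rw [hdeg]; positivity) (by simp [hmonic.leadingCoeff]) hmod2 ?_
  · rw [Polynomial.map_sub, map_X, Polynomial.map_C]
    exact irreducible_X_sub_C _
  · rw [modByMonic_X_sub_C_eq_C_eval, C_eval_two, Polynomial.map_C, Ne, Polynomial.C_eq_zero,
      Ideal.Quotient.eq_zero_iff_mem, algebraMap_int_eq, ZMod.ker_intCastRingHom,
      Ideal.span_singleton_pow, Ideal.mem_span_singleton]
    decide

end Polynomial.Chebyshev

theorem u_eq_chebyshev_C (n : ℕ) : u n = Chebyshev.C ℚ n := by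
  rw [u, Chebyshev.C_eq_two_mul_T_comp_half_mul_X, invOf_eq_inv, one_div]

theorem minpoly_two_cos_pow_two (r : ℕ) (hr : 2 ≤ r) :
    minpoly ℚ (2 * Real.cos (2 * π / (2 ^ r))) = u (2 ^ (r - 2)) := by
  obtain ⟨s, rfl⟩ := Nat.exists_eq_add_of_le hr
  obtain ⟨hmonic, -⟩ := Chebyshev.monic_C_two_pow_and_natDegree ℤ s
  rw [Nat.add_sub_cancel_left, u_eq_chebyshev_C, Nat.cast_pow, Nat.cast_two,
    ← Chebyshev.map_C (algebraMap ℤ ℚ)]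
  refine (minpoly.eq_of_irreducible_of_monic ?_ ?_ (hmonic.map _)).symm
  · exact hmonic.irreducible_iff_irreducible_map_fraction_map.1 (Chebyshev.irreducible_C_two_pow s)
  · rw [Chebyshev.map_C, Chebyshev.aeval_C_two_mul_cos]
    have : ((2 ^ s : ℤ) : ℝ) * (2 * π / 2 ^ (2 + s)) = π / 2 := by
      push_cast; field_simp; ring
    rw [this, cos_pi_div_two, mul_zero]
end
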